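/- arXiv:0802.4377 — 2 statements merged into one kernel-verified Lean document; each statement's English description precedes it below -/
import Mathlib

section
/- Let N be an odd unitary super perfect number with N ≠ 9 and N ≠ 165, and write σ*(N) = 2^{f₁} · q^{f₂} with q an odd prime and f₁, f₂ positive integers. Let p be a prime dividing N and let e be the exact multiplicity of p in N. If it is not the case that p is a Mersenne prime and e is odd, then p^e = 2^a · q^b − 1 for some positive integers a and b with a ≤ 2. -/
/-- The sum of the unitary divisors of `n` (divisors `d` of `n` with `gcd(d, n/d) = 1`). -/
def usigma (n : ℕ) : ℕ := ∑ d ∈ n.divisors.filter (fun d => Nat.Coprime d (n / d)), d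


lemma usigma_mul {m n : ℕ} (hm : m ≠ 0) (hn : n ≠ 0) (h : Nat.Coprime m n) :
    usigma (m * n) = usigma m * usigma n := by
  unfold usigma
  rw [Finset.sum_mul_sum, ← Finset.sum_product']
  refine Finset.sum_nbij' (fun d => (Nat.gcd d m, Nat.gcd d n)) (fun x => x.1 * x.2)
    ?_ ?_ ?_ ?_ ?_
  · intro d hd
    rw [Finset.mem_filter, Nat.mem_divisors] at hd
    obtain ⟨⟨hdvd, -⟩, hcop⟩ := hd
    have hsplit : Nat.gcd d m * Nat.gcd d n = d :=
      (Nat.gcd_mul_gcd_eq_iff_dvd_mul_of_coprime h).mpr hdvd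
    have h1 : Nat.gcd d m ∣ m := Nat.gcd_dvd_right d m
    have h2 : Nat.gcd d n ∣ n := Nat.gcd_dvd_right d n
    have hquot : m * n / d = (m / Nat.gcd d m) * (n / Nat.gcd d n) := by
      rw [Nat.div_mul_div_comm h1 h2, hsplit]
    rw [Finset.mem_product, Finset.mem_filter, Finset.mem_filter,
      Nat.mem_divisors, Nat.mem_divisors]
    refine ⟨⟨⟨h1, hm⟩, ?_⟩, ⟨⟨h2, hn⟩, ?_⟩⟩
    · exact Nat.Coprime.coprime_dvd_right
        (by rw [hquot]; exact dvd_mul_right _ _)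
        (Nat.Coprime.coprime_dvd_left (Nat.gcd_dvd_left d m) hcop)
    · exact Nat.Coprime.coprime_dvd_right
        (by rw [hquot]; exact dvd_mul_left _ _)
        (Nat.Coprime.coprime_dvd_left (Nat.gcd_dvd_left d n) hcop)
  · rintro ⟨x₁, x₂⟩ hx
    rw [Finset.mem_product, Finset.mem_filter, Finset.mem_filter,
      Nat.mem_divisors, Nat.mem_divisors] at hx
    obtain ⟨⟨⟨hx₁, -⟩, hc₁⟩, ⟨⟨hx₂, -⟩, hc₂⟩⟩ := hx
    rw [Finset.mem_filter, Nat.mem_divisors]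
    have hquot : m * n / (x₁ * x₂) = (m / x₁) * (n / x₂) :=
      (Nat.div_mul_div_comm hx₁ hx₂).symm
    refine ⟨⟨mul_dvd_mul hx₁ hx₂, by positivity⟩, ?_⟩
    rw [hquot]
    have hA : Nat.Coprime x₁ ((m / x₁) * (n / x₂)) :=
      Nat.Coprime.mul_right hc₁
        (Nat.Coprime.coprime_dvd_right (Nat.div_dvd_of_dvd hx₂)
          (Nat.Coprime.coprime_dvd_left hx₁ h))
    have hB : Nat.Coprime x₂ ((m / x₁) * (n / x₂)) :=
      Nat.Coprime.mul_right
        (Nat.Coprime.coprime_dvd_right (Nat.div_dvd_of_dvd hx₁)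
          (Nat.Coprime.coprime_dvd_left hx₂ h.symm)) hc₂
    exact Nat.Coprime.mul hA hB
  · intro d hd
    rw [Finset.mem_filter, Nat.mem_divisors] at hd
    exact (Nat.gcd_mul_gcd_eq_iff_dvd_mul_of_coprime h).mpr hd.1.1
  · rintro ⟨x₁, x₂⟩ hx
    rw [Finset.mem_product, Finset.mem_filter, Finset.mem_filter,
      Nat.mem_divisors, Nat.mem_divisors] at hx
    obtain ⟨⟨⟨hx₁, -⟩, -⟩, ⟨⟨hx₂, -⟩, -⟩⟩ := hx
    have hcm : Nat.Coprime x₂ m := Nat.Coprime.coprime_dvd_left hx₂ h.symm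
    have hcn : Nat.Coprime x₁ n := Nat.Coprime.coprime_dvd_left hx₁ h
    have e1 : Nat.gcd (x₁ * x₂) m = x₁ := by
      rw [mul_comm]; exact Nat.gcd_mul_of_coprime_of_dvd hcm hx₁
    have e2 : Nat.gcd (x₁ * x₂) n = x₂ := Nat.gcd_mul_of_coprime_of_dvd hcn hx₂
    simp [e1, e2]
  · intro d hd
    rw [Finset.mem_filter, Nat.mem_divisors] at hd
    exact ((Nat.gcd_mul_gcd_eq_iff_dvd_mul_of_coprime h).mpr hd.1.1).symm

lemma usigma_prime_pow {p k : ℕ} (hp : p.Prime) (hk : k ≠ 0) :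
    usigma (p ^ k) = p ^ k + 1 := by
  unfold usigma
  have hfilter : (p ^ k).divisors.filter (fun d => Nat.Coprime d (p ^ k / d))
      = {1, p ^ k} := by
    ext d
    simp only [Finset.mem_filter, Nat.mem_divisors, Finset.mem_insert,
      Finset.mem_singleton]
    constructor
    · rintro ⟨⟨hdvd, -⟩, hcop⟩
      obtain ⟨i, hi, rfl⟩ := (Nat.dvd_prime_pow hp).mp hdvd
      rcases Nat.eq_zero_or_pos i with rfl | hi0
      · left; simp
      rcases eq_or_lt_of_le hi with rfl | hik
      · right; rfl
      · exfalso
        have hq : p ^ k / p ^ i = p ^ (k - i) := Nat.pow_div hi hp.pos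
        rw [hq] at hcop
        have h1 : p ∣ p ^ i := dvd_pow_self p hi0.ne'
        have h2 : p ∣ p ^ (k - i) := dvd_pow_self p (by omega)
        have hg : Nat.gcd (p ^ i) (p ^ (k - i)) = 1 := hcop
        have := Nat.dvd_one.mp (hg ▸ Nat.dvd_gcd h1 h2)
        have := hp.one_lt; omega
    · rintro (rfl | rfl)
      · exact ⟨⟨one_dvd _, pow_ne_zero _ hp.pos.ne'⟩, Nat.coprime_one_left _⟩
      · refine ⟨⟨dvd_rfl, pow_ne_zero _ hp.pos.ne'⟩, ?_⟩
        rw [Nat.div_self (pow_pos hp.pos k)]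
        exact Nat.coprime_one_right _
  rw [hfilter]
  have h1 : (1 : ℕ) ≠ p ^ k := by
    have := Nat.one_lt_pow hk hp.one_lt; omega
  rw [Finset.sum_pair h1]
  omega


lemma odd_sq_mod8 {x : ℕ} (hx : x % 2 = 1) : x ^ 2 % 8 = 1 := by
  have h4 : x % 8 % 2 = x % 2 := Nat.mod_mod_of_dvd x (by norm_num)
  rw [Nat.pow_mod]
  have h : x % 8 = 1 ∨ x % 8 = 3 ∨ x % 8 = 5 ∨ x % 8 = 7 := by omega
  rcases h with h | h | h | h <;> rw [h] <;> norm_num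

lemma odd_pow_mod8 {p e : ℕ} (hp : p % 2 = 1) (he : Odd e) : p ^ e % 8 = p % 8 := by
  obtain ⟨t, rfl⟩ := he
  have hsq : p ^ 2 % 8 = 1 := odd_sq_mod8 hp
  rw [pow_succ, pow_mul, Nat.mul_mod, Nat.pow_mod, hsq, one_pow]
  simp [Nat.mod_mod_of_dvd]

lemma usp_core {p q e a b f₁ f₂ : ℕ} (hp : p.Prime) (hq : q.Prime) (hq2 : q ≠ 2)
    (hf₂ : 1 ≤ f₂) (he : Odd e) (ha : 3 ≤ a) (hb : 1 ≤ b)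
    (heq : p ^ e + 1 = 2 ^ a * q ^ b)
    (hdvd : p ∣ (2 ^ f₁ + 1) * (q ^ f₂ + 1)) : False := by
  have he1 : 1 ≤ e := he.pos
  -- p is odd
  have hp2 : p ≠ 2 := by
    rintro rfl
    have h2 : (2 : ℕ) ∣ 2 ^ e := dvd_pow_self 2 (by omega : e ≠ 0)
    have h2' : (2 : ℕ) ∣ 2 ^ a * q ^ b := dvd_mul_of_dvd_left (dvd_pow_self 2 (by omega)) _
    obtain ⟨c, hc⟩ := h2; obtain ⟨d, hd⟩ := h2'
    omega
  have hpodd : p % 2 = 1 := Nat.odd_iff.mp (hp.odd_of_ne_two hp2)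
  -- p % 8 = 7
  have h8 : (8 : ℕ) ∣ p ^ e + 1 := by
    rw [heq]
    exact dvd_mul_of_dvd_left (by calc (8:ℕ) = 2 ^ 3 := by norm_num
                                    _ ∣ 2 ^ a := pow_dvd_pow 2 ha) _
  have hmod8 : p ^ e % 8 = p % 8 := odd_pow_mod8 hpodd he
  have hp8 : p % 8 = 7 := by obtain ⟨c, hc⟩ := h8; omega
  have hp7 : 7 ≤ p := by omega
  haveI : Fact p.Prime := ⟨hp⟩
  haveI : Fact q.Prime := ⟨hq⟩
  haveI : Fact (2 < p) := ⟨by omega⟩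
  haveI : Fact (2 < q) := ⟨by have := hq.two_le; omega⟩
  have hip : Odd (p / 2) := Nat.odd_iff.mpr (by omega)
  have h2sq : IsSquare (2 : ZMod p) := (ZMod.exists_sq_eq_two_iff hp2).mpr (Or.inr hp8)
  have h2ne : (2 : ZMod p) ≠ 0 := by
    intro hz
    rw [show (2 : ZMod p) = ((2 : ℕ) : ZMod p) by push_cast; ring,
      ZMod.natCast_eq_zero_iff] at hz
    have := Nat.le_of_dvd (by norm_num) hz; omega
  have heuler2 : (2 : ZMod p) ^ (p / 2) = 1 := (ZMod.euler_criterion p h2ne).mp h2sq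
  -- p does not divide 2^f₁ + 1
  have hnd2 : ¬ p ∣ 2 ^ f₁ + 1 := by
    intro hd
    have h0 : ((2 ^ f₁ + 1 : ℕ) : ZMod p) = 0 :=
      (ZMod.natCast_eq_zero_iff _ _).mpr hd
    push_cast at h0
    have h2f : (2 : ZMod p) ^ f₁ = -1 := by linear_combination h0
    have hx : ((2 : ZMod p) ^ f₁) ^ (p / 2) = ((2 : ZMod p) ^ (p / 2)) ^ f₁ :=
      pow_right_comm _ _ _
    rw [h2f, heuler2, one_pow, Odd.neg_one_pow hip] at hx
    exact ZMod.neg_one_ne_one hx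
  have hdq : p ∣ q ^ f₂ + 1 := (hp.dvd_mul.mp hdvd).resolve_left hnd2
  have hqf : (q : ZMod p) ^ f₂ = -1 := by
    have h0 : ((q ^ f₂ + 1 : ℕ) : ZMod p) = 0 :=
      (ZMod.natCast_eq_zero_iff _ _).mpr hdq
    push_cast at h0
    linear_combination h0
  have hqne : (q : ZMod p) ≠ 0 := by
    intro hz
    rw [hz, zero_pow (by omega : f₂ ≠ 0)] at hqf
    exact (neg_ne_zero.mpr one_ne_zero) hqf.symm
  have hqsq : ¬ IsSquare (q : ZMod p) := by
    intro hs
    have h1 : (q : ZMod p) ^ (p / 2) = 1 := (ZMod.euler_criterion p hqne).mp hs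
    have hx : ((q : ZMod p) ^ f₂) ^ (p / 2) = ((q : ZMod p) ^ (p / 2)) ^ f₂ :=
      pow_right_comm _ _ _
    rw [hqf, h1, one_pow, Odd.neg_one_pow hip] at hx
    exact ZMod.neg_one_ne_one hx
  have hpq : p ≠ q := by
    rintro rfl
    exact hqne (ZMod.natCast_self p)
  have hqodd : q % 2 = 1 := Nat.odd_iff.mp (hq.odd_of_ne_two hq2)
  have hqdvd : q ∣ p ^ e + 1 := by
    rw [heq]; exact dvd_mul_of_dvd_right (dvd_pow_self q (by omega : b ≠ 0)) _
  have hpe_q : (p : ZMod q) ^ e = -1 := by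
    have h0 : ((p ^ e + 1 : ℕ) : ZMod q) = 0 :=
      (ZMod.natCast_eq_zero_iff _ _).mpr hqdvd
    push_cast at h0
    linear_combination h0
  have hpneq : (p : ZMod q) ≠ 0 := by
    intro hz
    rw [hz, zero_pow (by omega : e ≠ 0)] at hpe_q
    exact (neg_ne_zero.mpr one_ne_zero) hpe_q.symm
  have hq4 : q % 4 = 1 ∨ q % 4 = 3 := by omega
  rcases hq4 with h1 | h3
  · -- q ≡ 1 (mod 4)
    have hps : ¬ IsSquare (p : ZMod q) := fun hs =>
      hqsq ((ZMod.exists_sq_eq_prime_iff_of_mod_four_eq_one h1 hp2).mp hs)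
    have hd : (p : ZMod q) ^ (q / 2) = -1 := by
      have hsq1 : ((p : ZMod q) ^ (q / 2)) * ((p : ZMod q) ^ (q / 2)) = 1 := by
        rw [← pow_add, show q / 2 + q / 2 = q - 1 by omega]
        exact ZMod.pow_card_sub_one_eq_one hpneq
      rcases mul_self_eq_one_iff.mp hsq1 with h | h
      · exact absurd ((ZMod.euler_criterion q hpneq).mpr h) hps
      · exact h
    have hx : ((p : ZMod q) ^ e) ^ (q / 2) = ((p : ZMod q) ^ (q / 2)) ^ e :=
      pow_right_comm _ _ _
    rw [hpe_q, hd, Even.neg_one_pow (Nat.even_iff.mpr (by omega)),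
      Odd.neg_one_pow he] at hx
    exact ZMod.neg_one_ne_one hx.symm
  · -- q ≡ 3 (mod 4)
    have hp4 : p % 4 = 3 := by omega
    have hps : IsSquare (p : ZMod q) := by
      by_contra hns
      exact hqsq ((ZMod.exists_sq_eq_prime_iff_of_mod_four_eq_three hp4 h3 hpq).mpr hns)
    have h1q : (p : ZMod q) ^ (q / 2) = 1 := (ZMod.euler_criterion q hpneq).mp hps
    have hx : ((p : ZMod q) ^ e) ^ (q / 2) = ((p : ZMod q) ^ (q / 2)) ^ e :=
      pow_right_comm _ _ _
    rw [hpe_q, h1q, one_pow, Odd.neg_one_pow (Nat.odd_iff.mpr (by omega))] at hx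
    exact ZMod.neg_one_ne_one hx

/-- Let `N ≠ 9, 165` be an odd USP with `σ*(N) = 2^f₁ * q^f₂`, `q` an odd prime and
`f₁, f₂` positive. If `p` is a prime dividing `N` with exact multiplicity `e` in `N`,
and it is not the case that `p` is a Mersenne prime and `e` is odd, then
`p^e = 2^a * q^b - 1` for some positive integers `a ≤ 2` and `b`. -/
theorem usp_prime_power_form (N : ℕ) (hpos : 0 < N) (hodd : Odd N)
    (husp : usigma (usigma N) = 2 * N) (h9 : N ≠ 9) (h165 : N ≠ 165)
    (q f₁ f₂ : ℕ) (hq : q.Prime) (hqodd : Odd q) (hf₁ : 0 < f₁) (hf₂ : 0 < f₂)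
    (hsig : usigma N = 2 ^ f₁ * q ^ f₂)
    (p e : ℕ) (hp : p.Prime) (hpN : p ∣ N) (hpe : p ^ e ∣ N) (hpe1 : ¬ p ^ (e + 1) ∣ N)
    (hnm : ¬ ((∃ n, 0 < n ∧ p = 2 ^ n - 1) ∧ Odd e)) :
    ∃ a b : ℕ, 0 < a ∧ a ≤ 2 ∧ 0 < b ∧ p ^ e = 2 ^ a * q ^ b - 1 := by
  have hN0 : N ≠ 0 := hpos.ne'
  have he1 : 1 ≤ e := by
    rcases Nat.eq_zero_or_pos e with rfl | h
    · exact absurd (by simpa using hpN) hpe1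
    · exact h
  -- p and q are odd
  have hp2 : p ≠ 2 := by
    rintro rfl
    exact (Nat.not_even_iff_odd.mpr hodd) ((even_iff_two_dvd).mpr hpN)
  have hq2 : q ≠ 2 := by
    rintro rfl
    exact (Nat.not_even_iff_odd.mpr hqodd) (even_iff_two_dvd.mpr dvd_rfl)
  have hpodd : p % 2 = 1 := Nat.odd_iff.mp (hp.odd_of_ne_two hp2)
  -- exact divisibility: N = p^e * M with p ∤ M
  set M := N / p ^ e with hMdef
  have hM : N = p ^ e * M := (Nat.mul_div_cancel' hpe).symm
  have hpM : ¬ p ∣ M := by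
    intro hd
    exact hpe1 (by rw [hM, pow_succ]; exact mul_dvd_mul dvd_rfl hd)
  have hM0 : M ≠ 0 := by
    intro h0
    rw [h0, mul_zero] at hM
    exact hN0 hM
  have hcop : Nat.Coprime (p ^ e) M :=
    Nat.Coprime.pow_left _ ((Nat.Prime.coprime_iff_not_dvd hp).mpr hpM)
  have hus : usigma N = (p ^ e + 1) * usigma M := by
    rw [hM, usigma_mul (pow_ne_zero _ hp.pos.ne') hM0 hcop,
      usigma_prime_pow hp (by omega)]
  have hdvd : p ^ e + 1 ∣ 2 ^ f₁ * q ^ f₂ := by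
    rw [← hsig, hus]; exact dvd_mul_right _ _
  obtain ⟨y, z, hy, hz, hyz⟩ := Nat.dvd_mul.mp hdvd
  obtain ⟨a, ha, rfl⟩ := (Nat.dvd_prime_pow Nat.prime_two).mp hy
  obtain ⟨b, hb, rfl⟩ := (Nat.dvd_prime_pow hq).mp hz
  have heq : p ^ e + 1 = 2 ^ a * q ^ b := hyz.symm
  -- 2N = (2^f₁+1)(q^f₂+1)
  have hcop2 : Nat.Coprime (2 ^ f₁) (q ^ f₂) :=
    Nat.Coprime.pow _ _ ((Nat.coprime_primes Nat.prime_two hq).mpr (Ne.symm hq2))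
  have h2N : (2 ^ f₁ + 1) * (q ^ f₂ + 1) = 2 * N := by
    rw [← husp, hsig, usigma_mul (pow_ne_zero _ two_ne_zero) (pow_ne_zero _ hq.pos.ne') hcop2,
      usigma_prime_pow Nat.prime_two (by omega), usigma_prime_pow hq (by omega)]
  -- a ≥ 1
  have hpe_odd : p ^ e % 2 = 1 := by
    rw [Nat.pow_mod, hpodd, one_pow]
    omega
  have hqb_odd : q ^ b % 2 = 1 := by
    rw [Nat.pow_mod, Nat.odd_iff.mp hqodd, one_pow]
    omega
  have ha1 : 1 ≤ a := by
    by_contra hc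
    have : a = 0 := by omega
    rw [this, pow_zero, one_mul] at heq
    omega
  have hp3 : 3 ≤ p := by
    have := hp.two_le; omega
  rcases Nat.even_or_odd e with heven | hodde
  · -- e even: a = 1
    have he2 : 2 ≤ e := by
      rcases heven with ⟨t, ht⟩; omega
    have hmod4 : p ^ e % 4 = 1 := by
      obtain ⟨t, ht⟩ := heven
      have hsq : p ^ 2 % 8 = 1 := odd_sq_mod8 hpodd
      have hsq4 : p ^ 2 % 4 = 1 := by
        have := Nat.mod_mod_of_dvd (p ^ 2) (by norm_num : (4:ℕ) ∣ 8)
        omega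
      have : p ^ e = (p ^ 2) ^ t := by rw [← pow_mul]; congr 1; omega
      rw [this, Nat.pow_mod, hsq4, one_pow]
      omega
    have ha2 : a = 1 := by
      by_contra hc
      have h4 : (4 : ℕ) ∣ p ^ e + 1 := by
        rw [heq]
        exact dvd_mul_of_dvd_left
          (by calc (4:ℕ) = 2 ^ 2 := by norm_num
                _ ∣ 2 ^ a := pow_dvd_pow 2 (by omega)) _
      obtain ⟨c, hc4⟩ := h4
      omega
    have hb1 : 1 ≤ b := by
      by_contra hc
      have hb0 : b = 0 := by omega
      rw [ha2, hb0, pow_zero, mul_one, pow_one] at heq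
      have : p ≤ p ^ e := Nat.le_self_pow (by omega) p
      omega
    exact ⟨a, b, ha1, by omega, hb1, by omega⟩
  · -- e odd
    have hb1 : 1 ≤ b := by
      by_contra hc
      have hb0 : b = 0 := by omega
      rw [hb0, pow_zero, mul_one] at heq
      have hdvd1 : p + 1 ∣ p ^ e + 1 := by
        have := Odd.nat_add_dvd_pow_add_pow p 1 hodde
        simpa using this
      rw [heq] at hdvd1
      obtain ⟨n, hn, hpn⟩ := (Nat.dvd_prime_pow Nat.prime_two).mp hdvd1
      have hn2 : 2 ≤ n := by
        have h2n : 2 ^ 2 ≤ 2 ^ n := by omega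
        exact (Nat.pow_le_pow_iff_right (by norm_num)).mp h2n
      exact hnm ⟨⟨n, by omega, by omega⟩, hodde⟩
    by_cases haa : a ≤ 2
    · exact ⟨a, b, ha1, haa, hb1, by omega⟩
    · exfalso
      have hpdvd : p ∣ (2 ^ f₁ + 1) * (q ^ f₂ + 1) := by
        rw [h2N]; exact Dvd.dvd.mul_left hpN 2
      exact usp_core hp hq hq2 (by omega) hodde (by omega) hb1 heq hpdvd
end

section
/- If N is an odd unitary super perfect number with N ≠ 9, then N has at least three distinct prime factors. -/
def unitaryDivisors (n : ℕ) : Finset ℕ := n.divisors.filter fun d => d.Coprime (n / d)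

theorem usigma_eq_sum_unitaryDivisors (n : ℕ) : usigma n = ∑ d ∈ unitaryDivisors n, d := rfl

theorem mem_unitaryDivisors {n d : ℕ} :
    d ∈ unitaryDivisors n ↔ (d ∣ n ∧ n ≠ 0) ∧ d.Coprime (n / d) := by
  simp [unitaryDivisors]

theorem dvd_of_mem_unitaryDivisors {n d : ℕ} (h : d ∈ unitaryDivisors n) : d ∣ n :=
  (mem_unitaryDivisors.mp h).1.1

theorem unitaryDivisors_of_isPrimePow {n : ℕ} (hn : IsPrimePow n) :
    unitaryDivisors n = {1, n} := by
  obtain ⟨p, k, hp, -, rfl⟩ := (isPrimePow_nat_iff _).mp hn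
  ext d
  simp only [mem_unitaryDivisors, Finset.mem_insert, Finset.mem_singleton]
  constructor
  · rintro ⟨⟨hd, -⟩, hcop⟩
    obtain ⟨i, hik, rfl⟩ := (Nat.dvd_prime_pow hp).mp hd
    rw [Nat.pow_div hik hp.pos] at hcop
    by_contra! hi
    have hi0 : i ≠ 0 := by rintro rfl; exact hi.1 (pow_zero p)
    have hki : k - i ≠ 0 := fun h => hi.2 (by rw [show i = k by omega])
    exact hp.ne_one (Nat.eq_one_of_dvd_coprimes hcop (dvd_pow_self p hi0) (dvd_pow_self p hki))
  · rintro (rfl | rfl)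
    · simp [hp.ne_zero]
    · simp [hp.ne_zero, Nat.div_self (pow_pos hp.pos k)]

theorem usigma_one : usigma 1 = 1 := by decide

theorem usigma_of_isPrimePow {n : ℕ} (hn : IsPrimePow n) : usigma n = n + 1 := by
  rw [usigma_eq_sum_unitaryDivisors, unitaryDivisors_of_isPrimePow hn,
    Finset.sum_pair hn.one_lt.ne, add_comm]

theorem gcd_mul_eq_of_dvd_of_dvd {m n d₁ d₂ : ℕ} (hmn : m.Coprime n) (h₁ : d₁ ∣ m)
    (h₂ : d₂ ∣ n) : (d₁ * d₂).gcd m = d₁ := by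
  rw [Nat.Coprime.gcd_mul_right_cancel d₁ (hmn.coprime_dvd_right h₂).symm, Nat.gcd_eq_left h₁]

theorem gcd_mem_unitaryDivisors {m n d : ℕ} (hmn : m.Coprime n)
    (hd : d ∈ unitaryDivisors (m * n)) : d.gcd m ∈ unitaryDivisors m := by
  rw [mem_unitaryDivisors] at hd ⊢
  obtain ⟨⟨hd, hmn0⟩, hcop⟩ := hd
  have hsplit := (Nat.gcd_mul_gcd_eq_iff_dvd_mul_of_coprime hmn).mpr hd
  refine ⟨⟨Nat.gcd_dvd_right d m, left_ne_zero_of_mul hmn0⟩, ?_⟩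
  rw [← hsplit, ← Nat.div_mul_div_comm (Nat.gcd_dvd_right d m) (Nat.gcd_dvd_right d n)] at hcop
  exact (hcop.coprime_dvd_left (dvd_mul_right _ _)).coprime_dvd_right (dvd_mul_right _ _)

theorem mul_mem_unitaryDivisors {m n d₁ d₂ : ℕ} (hmn : m.Coprime n)
    (h₁ : d₁ ∈ unitaryDivisors m) (h₂ : d₂ ∈ unitaryDivisors n) :
    d₁ * d₂ ∈ unitaryDivisors (m * n) := by
  rw [mem_unitaryDivisors] at h₁ h₂ ⊢
  obtain ⟨⟨h₁, hm⟩, hc₁⟩ := h₁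
  obtain ⟨⟨h₂, hn⟩, hc₂⟩ := h₂
  refine ⟨⟨mul_dvd_mul h₁ h₂, mul_ne_zero hm hn⟩, ?_⟩
  rw [← Nat.div_mul_div_comm h₁ h₂]
  have h₁₂ := hmn.coprime_dvd_left h₁ |>.coprime_dvd_right (Nat.div_dvd_of_dvd h₂)
  have h₂₁ := hmn.symm.coprime_dvd_left h₂ |>.coprime_dvd_right (Nat.div_dvd_of_dvd h₁)
  exact Nat.Coprime.mul_left (hc₁.mul_right h₁₂) (h₂₁.mul_right hc₂)

theorem unitaryDivisors_mul {m n : ℕ} (hmn : m.Coprime n) :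
    unitaryDivisors (m * n) =
      (unitaryDivisors m ×ˢ unitaryDivisors n).image fun d => d.1 * d.2 := by
  ext d
  simp only [Finset.mem_image, Finset.mem_product, Prod.exists]
  constructor
  · intro hd
    refine ⟨d.gcd m, d.gcd n, ⟨gcd_mem_unitaryDivisors hmn hd, ?_⟩, ?_⟩
    · rw [mul_comm] at hd
      exact gcd_mem_unitaryDivisors hmn.symm hd
    · exact (Nat.gcd_mul_gcd_eq_iff_dvd_mul_of_coprime hmn).mpr (dvd_of_mem_unitaryDivisors hd)
  · rintro ⟨d₁, d₂, ⟨h₁, h₂⟩, rfl⟩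
    exact mul_mem_unitaryDivisors hmn h₁ h₂

theorem usigma_mul_s10 {m n : ℕ} (hmn : m.Coprime n) : usigma (m * n) = usigma m * usigma n := by
  simp only [usigma_eq_sum_unitaryDivisors]
  rw [unitaryDivisors_mul hmn, Finset.sum_image, Finset.sum_mul_sum, Finset.sum_product]
  rintro ⟨d₁, d₂⟩ hd ⟨e₁, e₂⟩ he h
  simp only [Finset.mem_coe, Finset.mem_product] at hd he h
  obtain ⟨hd₁, hd₂⟩ := And.imp dvd_of_mem_unitaryDivisors dvd_of_mem_unitaryDivisors hd
  obtain ⟨he₁, he₂⟩ := And.imp dvd_of_mem_unitaryDivisors dvd_of_mem_unitaryDivisors he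
  have h₁ : d₁ = e₁ := by
    rw [← gcd_mul_eq_of_dvd_of_dvd hmn hd₁ hd₂, h, gcd_mul_eq_of_dvd_of_dvd hmn he₁ he₂]
  have h₂ : d₂ = e₂ := by
    rw [← gcd_mul_eq_of_dvd_of_dvd hmn.symm hd₂ hd₁, mul_comm, h, mul_comm,
      gcd_mul_eq_of_dvd_of_dvd hmn.symm he₂ he₁]
  rw [h₁, h₂]

theorem usigma_eq_prod {n : ℕ} (hn : n ≠ 0) :
    usigma n = ∏ p ∈ n.primeFactors, (p ^ n.factorization p + 1) := by
  rw [Nat.multiplicative_factorization usigma (fun _ _ => usigma_mul_s10) usigma_one hn]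
  refine Finset.prod_congr n.support_factorization fun p hp => ?_
  exact usigma_of_isPrimePow ((Nat.prime_of_mem_primeFactors hp).isPrimePow.pow
    (Finsupp.mem_support_iff.mp hp))

theorem two_pow_card_primeFactors_dvd_usigma {n : ℕ} (hn : Odd n) :
    2 ^ n.primeFactors.card ∣ usigma n := by
  rw [usigma_eq_prod (by rintro rfl; simp at hn), ← Finset.prod_const]
  refine Finset.prod_dvd_prod_of_dvd _ _ fun p hp => ?_
  exact ((hn.of_dvd_nat (Nat.dvd_of_mem_primeFactors hp)).pow.add_one).two_dvd

theorem exists_isPrimePow_mul_of_card_primeFactors_eq_two {n : ℕ} (h : n.primeFactors.card = 2) :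
    ∃ P Q, IsPrimePow P ∧ IsPrimePow Q ∧ P.Coprime Q ∧ n = P * Q := by
  obtain ⟨p, q, hpq, hn⟩ := Finset.card_eq_two.mp h
  have hn0 : n ≠ 0 := by rintro rfl; simp at h
  have hp : p ∈ n.primeFactors := by simp [hn]
  have hq : q ∈ n.primeFactors := by simp [hn]
  have hpow : ∀ r ∈ n.primeFactors, IsPrimePow (r ^ n.factorization r) := fun r hr =>
    (Nat.prime_of_mem_primeFactors hr).isPrimePow.pow
      (Finsupp.mem_support_iff.mp (n.support_factorization ▸ hr))
  refine ⟨_, _, hpow p hp, hpow q hq, Nat.coprime_pow_primes _ _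
    (Nat.prime_of_mem_primeFactors hp) (Nat.prime_of_mem_primeFactors hq) hpq, ?_⟩
  conv_lhs => rw [← Nat.prod_factorization_pow_eq_self hn0]
  rw [Nat.prod_factorization_eq_prod_primeFactors, hn, Finset.prod_pair hpq]

-- `D = 2 ^ c + 1`, where `usigma N = 2 ^ c * m` with `m` odd; the identity is
-- `N * (D - 2) = D * (usigma N - N - 1 + D)` with the subtraction on the right moved across.
theorem exists_usp_identity {N : ℕ} (hodd : Odd N) (hN1 : N ≠ 1)
    (husp : usigma (usigma N) = 2 * N) :
    ∃ D, Odd D ∧ D ∣ N ∧ N * (D - 2) + D * (N + 1) = D * (usigma N + D) := by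
  have hN0 : N ≠ 0 := hodd.pos.ne'
  have hNmod := Nat.odd_iff.mp hodd
  have hM0 : usigma N ≠ 0 := by
    intro h
    rw [h, show usigma 0 = 0 from rfl] at husp
    omega
  obtain ⟨c, m, hm, hM⟩ := Nat.exists_eq_two_pow_mul_odd hM0
  have hMeven : 2 ∣ usigma N := by
    have hcard : N.primeFactors.card ≠ 0 := by simp [hN0, hN1]
    exact (dvd_pow_self 2 hcard).trans (two_pow_card_primeFactors_dvd_usigma hodd)
  have hc : c ≠ 0 := by
    rintro rfl
    rw [hM, pow_zero, one_mul] at hMeven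
    exact Nat.not_even_iff_odd.mpr hm (even_iff_two_dvd.mpr hMeven)
  have hσM : usigma (usigma N) = (2 ^ c + 1) * usigma m := by
    rw [hM, usigma_mul_s10 ((Nat.coprime_two_left.mpr hm).pow_left c),
      usigma_of_isPrimePow (Nat.prime_two.isPrimePow.pow hc)]
  have hσm : usigma m = m + 1 := by
    refine usigma_of_isPrimePow (isPrimePow_iff_card_primeFactors_eq_one.mpr ?_)
    have hle : m.primeFactors.card ≤ 1 := by
      by_contra! h
      have : 4 ∣ 2 * N :=
        (pow_dvd_pow 2 h).trans ((two_pow_card_primeFactors_dvd_usigma hm).trans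
          (husp ▸ hσM ▸ dvd_mul_left _ _))
      omega
    have hne : m.primeFactors.card ≠ 0 := by
      intro h
      obtain rfl : m = 1 := by simpa [hm.pos.ne'] using h
      rw [hσM, usigma_one, mul_one] at husp
      have : 2 ∣ 2 ^ c := dvd_pow_self 2 hc
      omega
    omega
  have hD : 2 ^ c + 1 ∣ 2 * N := husp ▸ hσM ▸ dvd_mul_right _ _
  have hDodd : Odd (2 ^ c + 1) := (Nat.even_pow.mpr ⟨even_two, hc⟩).add_one
  refine ⟨2 ^ c + 1, hDodd, (Nat.Coprime.dvd_of_dvd_mul_left hDodd.coprime_two_right hD), ?_⟩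
  rw [husp, hσm] at hσM
  have h2c : 2 ≤ 2 ^ c := Nat.le_self_pow hc 2
  rw [hM]
  zify [show 2 ≤ 2 ^ c + 1 by omega] at hσM ⊢
  linear_combination (2 : ℤ) ^ c * hσM

theorem eq_nine_of_mul_sub_two_eq_sq {N D : ℕ} (hD : Odd D) (h : N * (D - 2) = D ^ 2) :
    N = 9 := by
  have hD3 : 3 ≤ D := by
    obtain ⟨k, rfl⟩ := hD
    rcases k with _ | k
    · simp at h
    · omega
  have hcop : (D - 2).Coprime (D ^ 2) := by
    refine Nat.Coprime.pow_right 2 ?_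
    have h2 : (D - 2).Coprime 2 := Nat.coprime_two_right.mpr (by
      obtain ⟨k, rfl⟩ := hD; exact ⟨k - 1, by omega⟩)
    rwa [show D = D - 2 + 2 by omega, Nat.add_sub_cancel, Nat.coprime_self_add_right]
  have hD1 : D - 2 = 1 := Nat.Coprime.eq_one_of_dvd hcop ⟨N, by rw [← h, mul_comm]⟩
  obtain rfl : D = 3 := by omega
  simpa using h

theorem coprime_of_mul_sub_two_eq {P Q D K : ℕ} (hPQ : P.Coprime Q) (hDK : P * Q = D * K)
    (h : K * (D - 2) = P + Q + D) : D.Coprime K := by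
  have hdvd_add : D.gcd K ∣ P + Q := by
    have : D.gcd K ∣ P + Q + D := h ▸ (Nat.gcd_dvd_right D K).mul_right _
    exact (Nat.dvd_add_left (Nat.gcd_dvd_left D K)).mp this
  have hdvd_mul : D.gcd K ∣ P * Q := hDK ▸ (Nat.gcd_dvd_left D K).mul_right K
  have hcop : (P + Q).Coprime (P * Q) :=
    Nat.Coprime.mul_right (by rw [add_comm]; exact Nat.coprime_add_self_left.mpr hPQ.symm)
      (Nat.coprime_add_self_left.mpr hPQ)
  exact Nat.eq_one_of_dvd_coprimes hcop hdvd_add hdvd_mul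

theorem mul_sub_two_ne_of_isPrimePow {P Q D : ℕ} (hP : IsPrimePow P) (hQ : IsPrimePow Q)
    (hPodd : Odd P) (hQodd : Odd Q) (hPQ : P.Coprime Q) (hD : D ∣ P * Q) :
    P * Q * (D - 2) ≠ D * (P + Q + D) := by
  intro h
  obtain ⟨K, hK⟩ := hD
  have hPQ0 : P * Q ≠ 0 := mul_ne_zero hP.ne_zero hQ.ne_zero
  have hD0 : 0 < D := Nat.pos_of_ne_zero (left_ne_zero_of_mul (hK ▸ hPQ0))
  have hKD : K * (D - 2) = P + Q + D := by
    rw [hK, mul_assoc] at h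
    exact Nat.eq_of_mul_eq_mul_left hD0 h
  have hunit : D ∈ unitaryDivisors (P * Q) := by
    refine mem_unitaryDivisors.mpr ⟨⟨⟨K, hK⟩, hPQ0⟩, ?_⟩
    rw [hK, Nat.mul_div_cancel_left _ hD0]
    exact coprime_of_mul_sub_two_eq hPQ hK hKD
  -- the cases `D = A`, `K = B`, where the equation gives `B ∣ 2 * A`
  have hsingle :
      ∀ {A B : ℕ}, A.Coprime B → Odd B → 1 < B → B * (A - 2) ≠ A + B + A := by
    intro A B hAB hB hB1 h
    have : B ∣ B + 2 * A := ⟨A - 2, by rw [h]; ring⟩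
    exact hB1.ne' (Nat.Coprime.eq_one_of_dvd
      (Nat.Coprime.mul_right hB.coprime_two_right hAB.symm) ((Nat.dvd_add_right dvd_rfl).mp this))
  rw [unitaryDivisors_mul hPQ, unitaryDivisors_of_isPrimePow hP,
    unitaryDivisors_of_isPrimePow hQ] at hunit
  simp only [Finset.mem_image, Finset.mem_product, Finset.mem_insert, Finset.mem_singleton,
    Prod.exists] at hunit
  obtain ⟨d₁, d₂, ⟨h₁ | h₁, h₂ | h₂⟩, hd⟩ := hunit <;>
    simp only [h₁, h₂, one_mul, mul_one] at hd <;> subst hd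
  · simp at hKD
  · obtain rfl : K = P := by rw [mul_comm] at hK; exact (Nat.eq_of_mul_eq_mul_left hD0 hK).symm
    exact hsingle hPQ.symm hPodd hP.one_lt (by omega)
  · obtain rfl : K = Q := (Nat.eq_of_mul_eq_mul_left hD0 hK).symm
    exact hsingle hPQ hQodd hQ.one_lt hKD
  · obtain rfl : K = 1 := (Nat.mul_eq_left hPQ0).mp hK.symm
    have := hP.one_lt
    omega

theorem usp_omega_ge_three_general (N : ℕ) (hodd : Odd N)
    (husp : usigma (usigma N) = 2 * N) (h9 : N ≠ 9) :
    3 ≤ N.primeFactors.card := by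
  have hN1 : N ≠ 1 := by rintro rfl; simp [usigma_one] at husp
  obtain ⟨D, hDodd, hDN, key⟩ := exists_usp_identity hodd hN1 husp
  by_contra! hcard
  interval_cases h : N.primeFactors.card
  · simp [hodd.pos.ne', hN1] at h
  · rw [usigma_of_isPrimePow (isPrimePow_iff_card_primeFactors_eq_one.mpr h)] at key
    exact h9 (eq_nine_of_mul_sub_two_eq_sq hDodd (by linarith))
  · obtain ⟨P, Q, hP, hQ, hPQ, rfl⟩ := exists_isPrimePow_mul_of_card_primeFactors_eq_two h
    rw [usigma_mul_s10 hPQ, usigma_of_isPrimePow hP, usigma_of_isPrimePow hQ] at key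
    obtain ⟨hPodd, hQodd⟩ := Nat.odd_mul.mp hodd
    exact mul_sub_two_ne_of_isPrimePow hP hQ hPodd hQodd hPQ hDN (by linarith)

/-- If `N` is an odd unitary super perfect number with `N ≠ 9`, then `N` has at least
three distinct prime factors. -/
theorem usp_omega_ge_three (N : ℕ) (hpos : 0 < N) (hodd : Odd N)
    (husp : usigma (usigma N) = 2 * N) (h9 : N ≠ 9) :
    3 ≤ N.primeFactors.card :=
  usp_omega_ge_three_general N hodd husp h9
end
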